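/- Let n ∈ ℕ, t, λ ∈ ℂ, and let p be a monic polynomial of degree n over ℂ satisfying p''(x) + (2x² + t)·p'(x) − 2n·x·p(x) = λ·p(x) for all x ∈ ℂ. Set F(x) := p(x)·exp(θ(x;t)) and assume the repeated-eigenvalue condition I₁(F²) = I₃(F²) = I₅(F²). Then the antiderivative of F² is again a quasi-polynomial: there exists a polynomial q over ℂ such that q'(x) + (2x² + t)·q(x) = p(x)² for all x ∈ ℂ, equivalently the derivative of x ↦ q(x)·e^{2θ(x;t)} equals p(x)²·e^{2θ(x;t)} for all x ∈ ℂ. -/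

import Mathlib

/-- Direction at infinity of argument kπ/3. -/
noncomputable def rayDir (k : ℕ) : ℂ := Complex.exp ((k : ℂ) * Real.pi * Complex.I / 3)

/-- Ray integral I_k(f) = ω_k · ∫₀^∞ f(r·ω_k) dr. -/
noncomputable def rayIntegral (k : ℕ) (f : ℂ → ℂ) : ℂ :=
  rayDir k * ∫ r in Set.Ioi (0 : ℝ), f ((r : ℂ) * rayDir k)

/-!
Write `p² = q' + (2x² + t) q + a + b x` with `q` a polynomial: the operator `q ↦ q' + (2x² + t) q`
raises the degree by exactly two. Along each ray `ω` with `ω³ = -1` the weight `e^{2θ}` decays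
superexponentially, so the ray integral of `(q' + (2x² + t) q) e^{2θ} = (q e^{2θ})'` is `-q(0)`, and
`I_k(F²) = -q(0) + a M_k⁰(t) + b M_k¹(t)` with `M_kᵐ(t)` the ray integral of `xᵐ e^{2θ}`.
The hypotheses then say that `(a, b)` is annihilated by the matrix of contour moments
`M₃ᵐ - M_jᵐ` (`j = 1, 5`, `m = 0, 1`). Differentiating in `t` raises `m` by one, and
integrating `(e^{2θ})'` gives `2 M² + t M⁰ = -1`, so each contour moment `y = M₃⁰ - M_j⁰`
solves `y'' = -(t/2) y` and the determinant is a Wronskian, constant in `t`. At `t = 0` it is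
a product of positive real integrals and `(1 + ω₁)(1 + ω₅)(ω₅ - ω₁) ≠ 0`, so `a = b = 0`.
-/

open MeasureTheory Filter Set Polynomial Asymptotics Topology
open scoped Nat

lemma wronskian_eq_of_hasDerivAt {𝕜 : Type*} [RCLike 𝕜] {y₁ y₂ y₁' y₂' g : 𝕜 → 𝕜}
    (h₁ : ∀ t, HasDerivAt y₁ (y₁' t) t) (h₂ : ∀ t, HasDerivAt y₂ (y₂' t) t)
    (h₁' : ∀ t, HasDerivAt y₁' (g t * y₁ t) t) (h₂' : ∀ t, HasDerivAt y₂' (g t * y₂ t) t)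
    (s t : 𝕜) : y₁ s * y₂' s - y₂ s * y₁' s = y₁ t * y₂' t - y₂ t * y₁' t := by
  have hW : ∀ t, HasDerivAt (fun t => y₁ t * y₂' t - y₂ t * y₁' t) 0 t := fun t =>
    (((h₁ t).mul (h₂' t)).sub ((h₂ t).mul (h₁' t))).congr_deriv (by ring)
  exact is_const_of_deriv_eq_zero (fun t => (hW t).differentiableAt) (fun t => (hW t).deriv) s t

lemma eq_zero_of_mul_add_mul_eq_zero {R : Type*} [CommRing R] [NoZeroDivisors R]
    {a b u v u' v' : R} (h : a * u + b * v = 0) (h' : a * u' + b * v' = 0)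
    (hdet : u * v' - u' * v ≠ 0) : a = 0 ∧ b = 0 := by
  constructor
  · refine (mul_eq_zero.1 ?_).resolve_right hdet
    linear_combination v' * h - v * h'
  · refine (mul_eq_zero.1 ?_).resolve_right hdet
    linear_combination u * h' - u' * h

lemma eventually_cubic_le_neg (c : ℝ) : ∀ᶠ r : ℝ in atTop, -2 * r ^ 3 / 3 + c * r ≤ -r := by
  filter_upwards [eventually_ge_atTop (max 1 (3 * (|c| + 1)))] with r hr
  have hr1 : 1 ≤ r := le_of_max_le_left hr
  have hrc : 3 * (|c| + 1) ≤ r := le_of_max_le_right hr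
  have hr0 : 0 ≤ r := by linarith
  nlinarith [mul_le_mul_of_nonneg_right (le_abs_self c) hr0, mul_le_mul_of_nonneg_right hrc hr0,
    mul_le_mul_of_nonneg_right hr1 (mul_nonneg hr0 hr0)]

lemma isBigO_exp_cubic (c : ℝ) :
    (fun r : ℝ => Real.exp (-2 * r ^ 3 / 3 + c * r)) =O[atTop] fun r => Real.exp (-1 * r) :=
  IsBigO.of_bound 1 <| (eventually_cubic_le_neg c).mono fun r hr => by
    simpa [Real.norm_eq_abs, Real.abs_exp] using hr

lemma integrableOn_exp_cubic (c : ℝ) :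
    IntegrableOn (fun r : ℝ => Real.exp (-2 * r ^ 3 / 3 + c * r)) (Ioi 0) :=
  integrable_of_isBigO_exp_neg one_pos (by fun_prop) (isBigO_exp_cubic c)

lemma tendsto_exp_cubic (c : ℝ) :
    Tendsto (fun r : ℝ => Real.exp (-2 * r ^ 3 / 3 + c * r)) atTop (𝓝 0) :=
  (isBigO_exp_cubic c).trans_tendsto <| by simpa using Real.tendsto_exp_neg_atTop_nhds_zero

lemma pow_le_factorial_mul_exp {r : ℝ} (hr : 0 ≤ r) (m : ℕ) : r ^ m ≤ m ! * Real.exp r := by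
  have := Real.pow_div_factorial_le_exp (x := r) hr m
  rwa [div_le_iff₀ (by positivity), mul_comm] at this

lemma integral_pow_mul_exp_cubic_pos (m : ℕ) :
    0 < ∫ r in Ioi (0 : ℝ), r ^ m * Real.exp (-2 * r ^ 3 / 3) := by
  have hnonneg : ∀ r ∈ Ioi (0 : ℝ), 0 ≤ r ^ m * Real.exp (-2 * r ^ 3 / 3) := fun r hr => by
    have : (0 : ℝ) < r := hr
    positivity
  have hint : IntegrableOn (fun r : ℝ => r ^ m * Real.exp (-2 * r ^ 3 / 3)) (Ioi 0) := by
    refine ((integrableOn_exp_cubic 1).const_mul (m ! : ℝ)).mono' (by fun_prop) ?_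
    refine (ae_restrict_iff' measurableSet_Ioi).2 (.of_forall fun r hr => ?_)
    rw [Real.norm_of_nonneg (hnonneg r hr), one_mul, add_comm, Real.exp_add, ← mul_assoc]
    gcongr
    exact pow_le_factorial_mul_exp (le_of_lt hr) m
  rw [setIntegral_pos_iff_support_of_nonneg_ae
    ((ae_restrict_iff' measurableSet_Ioi).2 (.of_forall hnonneg)) hint]
  refine lt_of_lt_of_le (by simp : 0 < volume (Ioi (0 : ℝ)))
    (measure_mono fun r (hr : 0 < r) => ⟨?_, hr⟩)
  exact (mul_pos (pow_pos hr m) (Real.exp_pos _)).ne'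

lemma exists_norm_eval_le_mul_exp (P : ℂ[X]) :
    ∃ K, ∀ z : ℂ, ‖P.eval z‖ ≤ K * Real.exp ‖z‖ := by
  refine ⟨∑ i ∈ Finset.range (P.natDegree + 1), ‖P.coeff i‖ * i !, fun z => ?_⟩
  rw [eval_eq_sum_range, Finset.sum_mul]
  refine (norm_sum_le _ _).trans (Finset.sum_le_sum fun i _ => ?_)
  rw [norm_mul, norm_pow, mul_assoc]
  gcongr
  exact pow_le_factorial_mul_exp (norm_nonneg z) i

noncomputable def expTwoTheta (t x : ℂ) : ℂ := Complex.exp (2 * (x ^ 3 / 3 + t * x / 2))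

lemma hasDerivAt_expTwoTheta (t x : ℂ) :
    HasDerivAt (expTwoTheta t) ((2 * x ^ 2 + t) * expTwoTheta t x) x := by
  have h : HasDerivAt (fun x : ℂ => 2 * (x ^ 3 / 3 + t * x / 2)) (2 * x ^ 2 + t) x :=
    ((((hasDerivAt_pow 3 x).div_const 3).add
      (((hasDerivAt_id x).const_mul t).div_const 2)).const_mul 2).congr_deriv (by norm_num; ring)
  exact h.cexp.congr_deriv (mul_comm _ _)

lemma hasDerivAt_expTwoTheta_param (t x : ℂ) :
    HasDerivAt (fun t => expTwoTheta t x) (x * expTwoTheta t x) t := by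
  have h : HasDerivAt (fun t : ℂ => 2 * (x ^ 3 / 3 + t * x / 2)) x t :=
    ((((hasDerivAt_id t).mul_const x).div_const 2).const_add (x ^ 3 / 3)).const_mul 2
      |>.congr_deriv (by ring)
  exact h.cexp.congr_deriv (mul_comm _ _)

noncomputable def twistedDeriv (t : ℂ) : ℂ[X] →ₗ[ℂ] ℂ[X] :=
  derivative + LinearMap.mulLeft ℂ (2 * X ^ 2 + C t)

@[simp]
lemma twistedDeriv_apply (t : ℂ) (q : ℂ[X]) :
    twistedDeriv t q = derivative q + (2 * X ^ 2 + C t) * q := rfl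

lemma hasDerivAt_eval_mul_expTwoTheta (t : ℂ) (q : ℂ[X]) (x : ℂ) :
    HasDerivAt (fun w => q.eval w * expTwoTheta t w)
      ((twistedDeriv t q).eval x * expTwoTheta t x) x := by
  refine ((q.hasDerivAt x).mul (hasDerivAt_expTwoTheta t x)).congr_deriv ?_
  simp only [twistedDeriv_apply, eval_add, eval_mul, eval_pow, eval_X, eval_C, eval_ofNat]
  ring

lemma X_pow_mem_range_twistedDeriv_sup (t : ℂ) (k : ℕ) :
    X ^ k ∈ LinearMap.range (twistedDeriv t) ⊔ Submodule.span ℂ {1, X} := by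
  induction k using Nat.strong_induction_on with
  | _ k ih =>
    match k, ih with
    | 0, _ => exact Submodule.mem_sup_right (Submodule.subset_span (by simp))
    | 1, _ => exact Submodule.mem_sup_right (Submodule.subset_span (by simp))
    | k + 2, ih =>
      have h : (2 : ℂ) • X ^ (k + 2) =
          twistedDeriv t (X ^ k) - (k : ℂ) • X ^ (k - 1) - t • X ^ k := by
        simp only [twistedDeriv_apply, derivative_X_pow, smul_eq_C_mul, map_ofNat]
        ring
      have h2 : (2 : ℂ) • X ^ (k + 2)
          ∈ LinearMap.range (twistedDeriv t) ⊔ Submodule.span ℂ {1, X} := by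
        rw [h]
        exact Submodule.sub_mem _ (Submodule.sub_mem _
          (Submodule.mem_sup_left (LinearMap.mem_range_self _ _))
          (Submodule.smul_mem _ _ (ih _ (by omega)))) (Submodule.smul_mem _ _ (ih _ (by omega)))
      simpa [smul_smul] using Submodule.smul_mem _ (1 / 2 : ℂ) h2

lemma exists_eq_twistedDeriv_add (t : ℂ) (f : ℂ[X]) :
    ∃ q : ℂ[X], ∃ a b : ℂ, f = twistedDeriv t q + C a + C b * X := by
  have hf : f ∈ LinearMap.range (twistedDeriv t) ⊔ Submodule.span ℂ {1, X} := by
    induction f using Polynomial.induction_on' with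
    | add f g hf hg => exact Submodule.add_mem _ hf hg
    | monomial k c =>
      rw [← C_mul_X_pow_eq_monomial, ← smul_eq_C_mul]
      exact Submodule.smul_mem _ c (X_pow_mem_range_twistedDeriv_sup t k)
  obtain ⟨_, ⟨q, rfl⟩, _, hlin, hsum⟩ := Submodule.mem_sup.1 hf
  obtain ⟨a, b, rfl⟩ := Submodule.mem_span_pair.1 hlin
  exact ⟨q, a, b, by rw [← hsum, smul_eq_C_mul, smul_eq_C_mul, mul_one, add_assoc]⟩

section Ray

variable {ω : ℂ}

lemma norm_eq_one_of_pow_three_eq_neg_one (hω : ω ^ 3 = -1) : ‖ω‖ = 1 := by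
  have h : ‖ω‖ ^ 3 = 1 := by rw [← norm_pow, hω, norm_neg, norm_one]
  rwa [pow_eq_one_iff_of_nonneg (norm_nonneg ω) (by norm_num)] at h

lemma norm_ofReal_mul_of_pow_three_eq_neg_one (hω : ω ^ 3 = -1) {r : ℝ} (hr : 0 ≤ r) :
    ‖(r : ℂ) * ω‖ = r := by
  rw [norm_mul, norm_eq_one_of_pow_three_eq_neg_one hω, mul_one, Complex.norm_real,
    Real.norm_of_nonneg hr]

lemma norm_expTwoTheta_ray (hω : ω ^ 3 = -1) (t : ℂ) (r : ℝ) :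
    ‖expTwoTheta t (r * ω)‖ = Real.exp (-2 * r ^ 3 / 3 + (t * ω).re * r) := by
  have h : 2 * (((r : ℂ) * ω) ^ 3 / 3 + t * (r * ω) / 2)
      = ((-2 * r ^ 3 / 3 : ℝ) : ℂ) + (r : ℂ) * (t * ω) := by
    rw [mul_pow, hω]; push_cast; ring
  rw [expTwoTheta, h, Complex.norm_exp, Complex.add_re, Complex.ofReal_re, Complex.re_ofReal_mul,
    mul_comm r]

lemma norm_eval_mul_expTwoTheta_ray_le (hω : ω ^ 3 = -1) {P : ℂ[X]} {K : ℝ}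
    (hK : ∀ z, ‖P.eval z‖ ≤ K * Real.exp ‖z‖) {t : ℂ} {c : ℝ} (hc : ‖t‖ + 1 ≤ c)
    {r : ℝ} (hr : 0 ≤ r) :
    ‖P.eval (r * ω) * expTwoTheta t (r * ω)‖ ≤ K * Real.exp (-2 * r ^ 3 / 3 + c * r) := by
  have hK0 : 0 ≤ K := by
    simpa using (norm_nonneg _).trans (hK 0)
  have hre : (t * ω).re + 1 ≤ c := by
    have := Complex.re_le_norm (t * ω)
    rw [norm_mul, norm_eq_one_of_pow_three_eq_neg_one hω, mul_one] at this
    linarith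
  calc ‖P.eval (r * ω) * expTwoTheta t (r * ω)‖
      ≤ K * Real.exp r * Real.exp (-2 * r ^ 3 / 3 + (t * ω).re * r) := by
        rw [norm_mul, norm_expTwoTheta_ray hω]
        gcongr
        simpa only [norm_ofReal_mul_of_pow_three_eq_neg_one hω hr] using hK (r * ω)
    _ = K * Real.exp (-2 * r ^ 3 / 3 + ((t * ω).re + 1) * r) := by
        rw [mul_assoc, ← Real.exp_add]; ring_nf
    _ ≤ K * Real.exp (-2 * r ^ 3 / 3 + c * r) := by gcongr

lemma integrableOn_eval_mul_expTwoTheta_ray (hω : ω ^ 3 = -1) (P : ℂ[X]) (t : ℂ) :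
    IntegrableOn (fun r : ℝ => P.eval (r * ω) * expTwoTheta t (r * ω)) (Ioi 0) := by
  obtain ⟨K, hK⟩ := exists_norm_eval_le_mul_exp P
  refine ((integrableOn_exp_cubic (‖t‖ + 1)).const_mul K).mono'
    (by unfold expTwoTheta; fun_prop) ?_
  exact (ae_restrict_iff' measurableSet_Ioi).2 (.of_forall fun r hr =>
    norm_eval_mul_expTwoTheta_ray_le hω hK le_rfl (le_of_lt hr))

lemma tendsto_eval_mul_expTwoTheta_ray (hω : ω ^ 3 = -1) (P : ℂ[X]) (t : ℂ) :
    Tendsto (fun r : ℝ => P.eval (r * ω) * expTwoTheta t (r * ω)) atTop (𝓝 0) := by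
  obtain ⟨K, hK⟩ := exists_norm_eval_le_mul_exp P
  refine squeeze_zero_norm' ?_
    (by simpa only [mul_zero] using (tendsto_exp_cubic (‖t‖ + 1)).const_mul K)
  filter_upwards [eventually_ge_atTop 0] with r hr
  exact norm_eval_mul_expTwoTheta_ray_le hω hK le_rfl hr

lemma mul_integral_ray_eq_neg {G G' : ℂ → ℂ} (hG : ∀ w, HasDerivAt G (G' w) w)
    (hint : IntegrableOn (fun r : ℝ => G' (r * ω)) (Ioi 0))
    (hlim : Tendsto (fun r : ℝ => G (r * ω)) atTop (𝓝 0)) :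
    ω * ∫ r in Ioi (0 : ℝ), G' (r * ω) = -G 0 := by
  have hderiv : ∀ r : ℝ, HasDerivAt (fun r : ℝ => G (r * ω)) (ω * G' (r * ω)) r := fun r =>
    (((hG _).comp (r : ℂ) ((hasDerivAt_id (r : ℂ)).mul_const ω)).comp_ofReal).congr_deriv
      (by simp [mul_comm])
  rw [← integral_const_mul,
    integral_Ioi_of_hasDerivAt_of_tendsto' (fun r _ => hderiv r) (hint.const_mul ω) hlim]
  simp

end Ray

lemma rayDir_pow_three {k : ℕ} (hk : Odd k) : rayDir k ^ 3 = -1 := by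
  rw [rayDir, ← Complex.exp_nat_mul]
  have h : ((3 : ℕ) : ℂ) * (k * Real.pi * Complex.I / 3) = k * (Real.pi * Complex.I) := by
    push_cast; ring
  rw [h, Complex.exp_nat_mul, Complex.exp_pi_mul_I, hk.neg_one_pow]

lemma rayDir_one : rayDir 1 = 1 / 2 + (Real.sqrt 3 / 2 : ℝ) * Complex.I := by
  have h : ((1 : ℕ) : ℂ) * Real.pi * Complex.I / 3 = ((Real.pi / 3 : ℝ) : ℂ) * Complex.I := by
    push_cast; ring
  rw [rayDir, h, Complex.exp_mul_I, ← Complex.ofReal_cos, ← Complex.ofReal_sin,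
    Real.cos_pi_div_three, Real.sin_pi_div_three]
  push_cast; ring

lemma rayDir_three : rayDir 3 = -1 := by
  have h : ((3 : ℕ) : ℂ) * Real.pi * Complex.I / 3 = Real.pi * Complex.I := by
    push_cast; ring
  rw [rayDir, h, Complex.exp_pi_mul_I]

lemma rayDir_five : rayDir 5 = 1 / 2 - (Real.sqrt 3 / 2 : ℝ) * Complex.I := by
  have h : ((5 : ℕ) : ℂ) * Real.pi * Complex.I / 3
      = ((-(Real.pi / 3) : ℝ) : ℂ) * Complex.I + 2 * Real.pi * Complex.I := by
    push_cast; ring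
  rw [rayDir, h, Complex.exp_add, Complex.exp_two_pi_mul_I, mul_one, Complex.exp_mul_I,
    ← Complex.ofReal_cos, ← Complex.ofReal_sin, Real.cos_neg, Real.sin_neg,
    Real.cos_pi_div_three, Real.sin_pi_div_three]
  push_cast; ring

noncomputable def rayPairing (k : ℕ) (t : ℂ) (P : ℂ[X]) : ℂ :=
  rayIntegral k fun x => P.eval x * expTwoTheta t x

noncomputable def rayMoment (k m : ℕ) (t : ℂ) : ℂ := rayPairing k t (X ^ m)

section RayPairing

variable {k : ℕ}

lemma rayPairing_add (hk : Odd k) (t : ℂ) (P Q : ℂ[X]) :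
    rayPairing k t (P + Q) = rayPairing k t P + rayPairing k t Q := by
  have hω := rayDir_pow_three hk
  simp only [rayPairing, rayIntegral, eval_add, add_mul]
  rw [integral_add (integrableOn_eval_mul_expTwoTheta_ray hω P t)
    (integrableOn_eval_mul_expTwoTheta_ray hω Q t), mul_add]

lemma rayPairing_C_mul (t a : ℂ) (P : ℂ[X]) :
    rayPairing k t (C a * P) = a * rayPairing k t P := by
  simp only [rayPairing, rayIntegral, eval_mul, eval_C, mul_assoc, integral_const_mul]
  ring

lemma rayPairing_twistedDeriv (hk : Odd k) (t : ℂ) (q : ℂ[X]) :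
    rayPairing k t (twistedDeriv t q) = -q.eval 0 := by
  have hω := rayDir_pow_three hk
  have h := mul_integral_ray_eq_neg (hasDerivAt_eval_mul_expTwoTheta t q)
    (integrableOn_eval_mul_expTwoTheta_ray hω _ t) (tendsto_eval_mul_expTwoTheta_ray hω q t)
  rwa [show expTwoTheta t 0 = 1 by simp [expTwoTheta], mul_one] at h

lemma rayPairing_twistedDeriv_add (hk : Odd k) (t : ℂ) (q : ℂ[X]) (a b : ℂ) :
    rayPairing k t (twistedDeriv t q + C a + C b * X)
      = -q.eval 0 + a * rayMoment k 0 t + b * rayMoment k 1 t := by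
  rw [rayPairing_add hk, rayPairing_add hk, rayPairing_twistedDeriv hk, ← mul_one (C a),
    rayPairing_C_mul, rayPairing_C_mul, rayMoment, rayMoment, pow_zero, pow_one]

lemma two_mul_rayMoment_two_add (hk : Odd k) (t : ℂ) :
    2 * rayMoment k 2 t + t * rayMoment k 0 t = -1 := by
  have h : twistedDeriv t 1 = C 2 * X ^ 2 + C t * X ^ 0 := by simp [map_ofNat]
  have := rayPairing_twistedDeriv hk t 1
  rwa [h, rayPairing_add hk, rayPairing_C_mul, rayPairing_C_mul, eval_one] at this

lemma hasDerivAt_rayMoment (hk : Odd k) (m : ℕ) (t₀ : ℂ) :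
    HasDerivAt (rayMoment k m) (rayMoment k (m + 1) t₀) t₀ := by
  have hω := rayDir_pow_three hk
  obtain ⟨K, hK⟩ := exists_norm_eval_le_mul_exp (X ^ (m + 1) : ℂ[X])
  have hbound : ∀ r : ℝ, 0 < r → ∀ t ∈ Metric.ball t₀ 1,
      ‖(X ^ (m + 1) : ℂ[X]).eval (r * rayDir k) * expTwoTheta t (r * rayDir k)‖
        ≤ K * Real.exp (-2 * r ^ 3 / 3 + (‖t₀‖ + 2) * r) := fun r hr t ht => by
    refine norm_eval_mul_expTwoTheta_ray_le hω hK ?_ hr.le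
    linarith [norm_sub_norm_le t t₀, mem_ball_iff_norm.1 ht]
  have h := hasDerivAt_integral_of_dominated_loc_of_deriv_le
    (μ := volume.restrict (Ioi 0)) (Metric.ball_mem_nhds t₀ one_pos)
    (F := fun t (r : ℝ) => (X ^ m : ℂ[X]).eval (r * rayDir k) * expTwoTheta t (r * rayDir k))
    (.of_forall fun t => (integrableOn_eval_mul_expTwoTheta_ray hω _ t).aestronglyMeasurable)
    (integrableOn_eval_mul_expTwoTheta_ray hω _ t₀)
    (integrableOn_eval_mul_expTwoTheta_ray hω _ t₀).aestronglyMeasurable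
    ((ae_restrict_iff' measurableSet_Ioi).2 (.of_forall hbound))
    ((integrableOn_exp_cubic _).const_mul K)
    (.of_forall fun r t _ => ((hasDerivAt_expTwoTheta_param t _).const_mul _).congr_deriv
      (by simp only [eval_pow, eval_X]; ring))
  exact h.2.const_mul (rayDir k)

lemma rayMoment_apply_zero (hk : Odd k) (m : ℕ) :
    rayMoment k m 0 = rayDir k ^ (m + 1)
      * ((∫ r in Ioi (0 : ℝ), r ^ m * Real.exp (-2 * r ^ 3 / 3) : ℝ) : ℂ) := by
  have hω := rayDir_pow_three hk
  have h : ∀ r : ℝ, (X ^ m : ℂ[X]).eval (r * rayDir k) * expTwoTheta 0 (r * rayDir k)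
      = rayDir k ^ m * ((r ^ m * Real.exp (-2 * r ^ 3 / 3) : ℝ) : ℂ) := fun r => by
    rw [expTwoTheta, mul_pow, hω, eval_pow, eval_X]
    push_cast
    ring_nf
  simp only [rayMoment, rayPairing, rayIntegral, h, integral_const_mul, integral_complex_ofReal]
  ring

end RayPairing

noncomputable def contourMoment (j m : ℕ) (t : ℂ) : ℂ := rayMoment 3 m t - rayMoment j m t

section ContourMoment

variable {j : ℕ}

lemma hasDerivAt_contourMoment (hj : Odd j) (m : ℕ) (t : ℂ) :
    HasDerivAt (contourMoment j m) (contourMoment j (m + 1) t) t :=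
  (hasDerivAt_rayMoment (by decide) m t).sub (hasDerivAt_rayMoment hj m t)

lemma contourMoment_two (hj : Odd j) (t : ℂ) :
    contourMoment j 2 t = -(t / 2) * contourMoment j 0 t := by
  have h₃ := two_mul_rayMoment_two_add (k := 3) (by decide) t
  have hⱼ := two_mul_rayMoment_two_add hj t
  unfold contourMoment
  linear_combination (h₃ - hⱼ) / 2

lemma hasDerivAt_contourMoment_one (hj : Odd j) (t : ℂ) :
    HasDerivAt (contourMoment j 1) (-(t / 2) * contourMoment j 0 t) t :=
  contourMoment_two hj t ▸ hasDerivAt_contourMoment hj 1 t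

end ContourMoment

lemma contourMoment_wronskian_ne_zero (t : ℂ) :
    contourMoment 1 0 t * contourMoment 5 1 t - contourMoment 5 0 t * contourMoment 1 1 t ≠ 0 := by
  rw [wronskian_eq_of_hasDerivAt (hasDerivAt_contourMoment odd_one 0)
    (hasDerivAt_contourMoment (by decide) 0) (hasDerivAt_contourMoment_one odd_one)
    (hasDerivAt_contourMoment_one (by decide)) t 0]
  set c₀ := ∫ r in Ioi (0 : ℝ), r ^ 0 * Real.exp (-2 * r ^ 3 / 3)
  set c₁ := ∫ r in Ioi (0 : ℝ), r ^ 1 * Real.exp (-2 * r ^ 3 / 3)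
  have hW : contourMoment 1 0 0 * contourMoment 5 1 0 - contourMoment 5 0 0 * contourMoment 1 1 0
      = c₀ * c₁ * ((1 + rayDir 1) * (1 + rayDir 5) * (rayDir 5 - rayDir 1)) := by
    simp only [contourMoment, rayMoment_apply_zero odd_one,
      rayMoment_apply_zero (k := 3) (by decide), rayMoment_apply_zero (k := 5) (by decide),
      rayDir_three]
    ring
  have hc₀ : (c₀ : ℂ) ≠ 0 := Complex.ofReal_ne_zero.2 (integral_pow_mul_exp_cubic_pos 0).ne'
  have hc₁ : (c₁ : ℂ) ≠ 0 := Complex.ofReal_ne_zero.2 (integral_pow_mul_exp_cubic_pos 1).ne'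
  have h₁ : 1 + rayDir 1 ≠ 0 := fun h => by
    have := congrArg Complex.re h; norm_num [rayDir_one] at this
  have h₅ : 1 + rayDir 5 ≠ 0 := fun h => by
    have := congrArg Complex.re h; norm_num [rayDir_five] at this
  have h₁₅ : rayDir 5 - rayDir 1 ≠ 0 := fun h => by
    have := congrArg Complex.im h
    norm_num [rayDir_one, rayDir_five] at this
    linarith [Real.sqrt_pos.2 (by norm_num : (0 : ℝ) < 3)]
  rw [hW]
  exact mul_ne_zero (mul_ne_zero hc₀ hc₁) (mul_ne_zero (mul_ne_zero h₁ h₅) h₁₅)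

lemma sq_eval_mul_exp_eq_eval_sq_mul_expTwoTheta (p : ℂ[X]) (t : ℂ) :
    (fun x => (p.eval x * Complex.exp (x ^ 3 / 3 + t * x / 2)) ^ 2)
      = fun x => (p ^ 2).eval x * expTwoTheta t x := by
  ext x
  rw [mul_pow, ← Complex.exp_nat_mul, eval_pow, expTwoTheta]
  push_cast
  ring_nf

theorem antiderivative_is_quasipolynomial_general
    (t : ℂ) (p : Polynomial ℂ)
    (h13 : rayIntegral 1 (fun x => (p.eval x * Complex.exp (x ^ 3 / 3 + t * x / 2)) ^ 2)
      = rayIntegral 3 (fun x => (p.eval x * Complex.exp (x ^ 3 / 3 + t * x / 2)) ^ 2))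
    (h35 : rayIntegral 3 (fun x => (p.eval x * Complex.exp (x ^ 3 / 3 + t * x / 2)) ^ 2)
      = rayIntegral 5 (fun x => (p.eval x * Complex.exp (x ^ 3 / 3 + t * x / 2)) ^ 2)) :
    ∃ q : Polynomial ℂ,
      (∀ x : ℂ, q.derivative.eval x + (2 * x ^ 2 + t) * q.eval x = (p.eval x) ^ 2) ∧
      (∀ x : ℂ, HasDerivAt (fun w => q.eval w * Complex.exp (2 * (w ^ 3 / 3 + t * w / 2)))
        ((p.eval x) ^ 2 * Complex.exp (2 * (x ^ 3 / 3 + t * x / 2))) x) := by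
  obtain ⟨q, a, b, hpq⟩ := exists_eq_twistedDeriv_add t (p ^ 2)
  have hI : ∀ k, Odd k →
      rayIntegral k (fun x => (p.eval x * Complex.exp (x ^ 3 / 3 + t * x / 2)) ^ 2)
        = -q.eval 0 + a * rayMoment k 0 t + b * rayMoment k 1 t := fun k hk => by
    rw [sq_eval_mul_exp_eq_eval_sq_mul_expTwoTheta, ← rayPairing, hpq,
      rayPairing_twistedDeriv_add hk]
  rw [hI 1 odd_one, hI 3 (by decide)] at h13
  rw [hI 3 (by decide), hI 5 (by decide)] at h35
  have h₁ : a * contourMoment 1 0 t + b * contourMoment 1 1 t = 0 := by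
    unfold contourMoment; linear_combination -h13
  have h₅ : a * contourMoment 5 0 t + b * contourMoment 5 1 t = 0 := by
    unfold contourMoment; linear_combination h35
  obtain ⟨rfl, rfl⟩ := eq_zero_of_mul_add_mul_eq_zero h₁ h₅ (contourMoment_wronskian_ne_zero t)
  simp only [map_zero, zero_mul, add_zero] at hpq
  refine ⟨q, fun x => ?_, fun x => ?_⟩
  · simpa using congrArg (eval x) hpq.symm
  · rw [← eval_pow, hpq]
    exact hasDerivAt_eval_mul_expTwoTheta t q x

/-- under the repeated-eigenvalue condition, the antiderivative of
F² = (p·e^θ)² is again a quasi-polynomial: there is a polynomial q with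
q' + (2x²+t)q = p², i.e. (q·e^{2θ})' = p²·e^{2θ}. -/
theorem antiderivative_is_quasipolynomial
    (n : ℕ) (t lam : ℂ) (p : Polynomial ℂ) (hmonic : p.Monic) (hdeg : p.natDegree = n)
    (heq : ∀ x : ℂ, (p.derivative.derivative).eval x
        + (2 * x ^ 2 + t) * p.derivative.eval x
        - 2 * (n : ℂ) * x * p.eval x = lam * p.eval x)
    (h13 : rayIntegral 1 (fun x => (p.eval x * Complex.exp (x ^ 3 / 3 + t * x / 2)) ^ 2)
      = rayIntegral 3 (fun x => (p.eval x * Complex.exp (x ^ 3 / 3 + t * x / 2)) ^ 2))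
    (h35 : rayIntegral 3 (fun x => (p.eval x * Complex.exp (x ^ 3 / 3 + t * x / 2)) ^ 2)
      = rayIntegral 5 (fun x => (p.eval x * Complex.exp (x ^ 3 / 3 + t * x / 2)) ^ 2)) :
    ∃ q : Polynomial ℂ,
      (∀ x : ℂ, q.derivative.eval x + (2 * x ^ 2 + t) * q.eval x = (p.eval x) ^ 2) ∧
      (∀ x : ℂ, HasDerivAt (fun w => q.eval w * Complex.exp (2 * (w ^ 3 / 3 + t * w / 2)))
        ((p.eval x) ^ 2 * Complex.exp (2 * (x ^ 3 / 3 + t * x / 2))) x) :=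
  antiderivative_is_quasipolynomial_general t p h13 h35
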